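/- arXiv:1607.02644 — 5 statements merged into one kernel-verified Lean document; each statement's English description precedes it below -/
import Mathlib

section
/- Let μ be a Borel probability measure on the circle 𝕋 ≅ [0,1) whose distribution function D_μ(x) = μ[0,x) is continuous and satisfies D_μ(x) = ∑_{i=0}^{n-1} [D_μ((x+i)/n) - D_μ(i/n)] for all x ∈ [0,1]. Then for every positive integer k, ∫₀¹ e^{2πikx} dμ(x) = ∫₀¹ e^{2πiknx} dμ(x), i.e., the Fourier coefficients satisfy μ̂(k) = μ̂(kn). -/
open MeasureTheory Set Real Complex

/-- If the distribution function `D_μ(x) = μ [0,x)` of a Borel probability measure `μ` on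
`[0,1)` is continuous and `T_n`-invariant, then `μ̂(k) = μ̂(kn)` for every positive integer
`k`, i.e. `∫ e(kx) dμ = ∫ e(knx) dμ`. -/
theorem fourier_coeff_eq_of_distribution_Tn_invariant (n : ℕ) (hn : 2 ≤ n)
    (μ : Measure ℝ) [IsProbabilityMeasure μ] (hsupp : μ (Ico 0 1) = 1)
    (hDcont : Continuous fun x : ℝ => (μ (Ico 0 x)).toReal)
    (hDinv : ∀ x ∈ Icc (0:ℝ) 1,
      (μ (Ico 0 x)).toReal =
        ∑ i ∈ Finset.range n,
          ((μ (Ico 0 ((x + i) / n))).toReal - (μ (Ico 0 ((i : ℝ) / n))).toReal)) :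
    ∀ k : ℕ, 0 < k →
      ∫ x, Complex.exp (2 * π * I * k * x) ∂μ =
        ∫ x, Complex.exp (2 * π * I * (k * n) * x) ∂μ := by
  intro k hk
  have hn0 : (0:ℝ) < n := by positivity
  set T : ℝ → ℝ := fun y => Int.fract ((n : ℝ) * y) with hTdef
  have hTmeas : Measurable T := measurable_fract.comp (measurable_const_mul _)
  set ν := μ.map T with hνdef
  haveI : IsProbabilityMeasure ν := Measure.isProbabilityMeasure_map hTmeas.aemeasurable
  have hcomp : μ (Ico (0:ℝ) 1)ᶜ = 0 := by
    have := measure_compl (μ := μ) (s := Ico (0:ℝ) 1) measurableSet_Ico (measure_ne_top μ _)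
    rw [hsupp, measure_univ] at this
    simpa using this
  -- the per-term additivity
  have hadd : ∀ a b : ℝ, 0 ≤ a → a ≤ b →
      μ (Ico 0 a) + μ (Ico a b) = μ (Ico 0 b) := by
    intro a b ha hab
    rw [← measure_union (by simp [Set.Ico_disjoint_Ico, min_le_iff]) measurableSet_Ico,
      Ico_union_Ico_eq_Ico ha hab]
  -- distribution functions agree on [0,1]
  have hD : ∀ x ∈ Icc (0:ℝ) 1, ν (Ico 0 x) = μ (Ico 0 x) := by
    intro x hx
    obtain ⟨hx0, hx1⟩ := hx
    have hset : T ⁻¹' (Ico 0 x) ∩ Ico 0 1 =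
        ⋃ i ∈ Finset.range n, Ico ((i:ℝ)/n) ((x + i)/n) := by
      ext y
      simp only [mem_inter_iff, mem_preimage, mem_Ico, mem_iUnion, Finset.mem_range,
        hTdef]
      constructor
      · rintro ⟨⟨-, hfx⟩, hy0, hy1⟩
        refine ⟨⌊(n:ℝ) * y⌋.toNat, ?_, ?_, ?_⟩
        · have h1 : ⌊(n:ℝ) * y⌋ < n := by
            have : (n:ℝ) * y < n := by nlinarith
            exact_mod_cast Int.floor_lt.2 (by push_cast; linarith)
          have h0 : 0 ≤ ⌊(n:ℝ) * y⌋ := Int.floor_nonneg.2 (by positivity)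
          omega
        · have h0 : 0 ≤ ⌊(n:ℝ) * y⌋ := Int.floor_nonneg.2 (by positivity)
          have hcast : ((⌊(n:ℝ) * y⌋.toNat : ℕ) : ℝ) = ((⌊(n:ℝ) * y⌋ : ℤ) : ℝ) := by
            exact_mod_cast Int.toNat_of_nonneg h0
          rw [div_le_iff₀ hn0, hcast]
          have := Int.floor_le ((n:ℝ) * y)
          linarith
        · have h0 : 0 ≤ ⌊(n:ℝ) * y⌋ := Int.floor_nonneg.2 (by positivity)
          have hcast : ((⌊(n:ℝ) * y⌋.toNat : ℕ) : ℝ) = ((⌊(n:ℝ) * y⌋ : ℤ) : ℝ) := by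
            exact_mod_cast Int.toNat_of_nonneg h0
          rw [lt_div_iff₀ hn0, hcast]
          have hfr : Int.fract ((n:ℝ) * y) = (n:ℝ) * y - ⌊(n:ℝ) * y⌋ := rfl
          rw [hfr] at hfx
          linarith
      · rintro ⟨i, hin, hiy, hyi⟩
        have h1 : (i:ℝ) ≤ (n:ℝ) * y := by
          rw [div_le_iff₀ hn0] at hiy; linarith
        have h2 : (n:ℝ) * y < x + i := by
          rw [lt_div_iff₀ hn0] at hyi; linarith
        have hfl : (i:ℝ) ≤ (⌊(n:ℝ) * y⌋ : ℝ) := by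
          exact_mod_cast Int.le_floor.2 (by exact_mod_cast h1)
        have hfr : Int.fract ((n:ℝ) * y) = (n:ℝ) * y - ⌊(n:ℝ) * y⌋ := rfl
        have hy0 : 0 ≤ y := le_trans (by positivity) hiy
        have hy1 : y < 1 := by
          have : x + (i:ℝ) ≤ n := by
            have : (i:ℝ) ≤ (n:ℝ) - 1 := by
              have : (i:ℝ) + 1 ≤ n := by exact_mod_cast hin
              linarith
            linarith
          nlinarith
        exact ⟨⟨Int.fract_nonneg _, by rw [hfr]; linarith⟩, hy0, hy1⟩
    have hdisj : (↑(Finset.range n) : Set ℕ).PairwiseDisjoint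
        fun i : ℕ => Ico ((i:ℝ)/n) ((x + i)/n) := by
      intro i hi j hj hij
      simp only [Finset.coe_range, mem_Iio] at hi hj
      rw [Function.onFun, Set.Ico_disjoint_Ico]
      rcases lt_or_gt_of_ne hij with h | h
      · refine le_trans (min_le_left _ _) (le_trans ?_ (le_max_right _ _))
        rw [div_le_div_iff_of_pos_right hn0]
        have : (i:ℝ) + 1 ≤ j := by exact_mod_cast h
        linarith
      · refine le_trans (min_le_right _ _) (le_trans ?_ (le_max_left _ _))
        rw [div_le_div_iff_of_pos_right hn0]
        have : (j:ℝ) + 1 ≤ i := by exact_mod_cast h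
        linarith
    have hν1 : ν (Ico 0 x) = μ (T ⁻¹' (Ico 0 x)) :=
      Measure.map_apply hTmeas measurableSet_Ico
    have hν2 : ν (Ico 0 x) = ∑ i ∈ Finset.range n, μ (Ico ((i:ℝ)/n) ((x + i)/n)) := by
      rw [hν1, ← measure_inter_conull hcomp, hset,
        measure_biUnion_finset hdisj (fun i _ => measurableSet_Ico)]
    -- compare via toReal
    have hfin : ∀ s : Set ℝ, μ s ≠ ⊤ := fun s => measure_ne_top μ s
    have hterm : ∀ i ∈ Finset.range n,
        (μ (Ico ((i:ℝ)/n) ((x + i)/n))).toReal =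
          (μ (Ico 0 ((x + i)/n))).toReal - (μ (Ico 0 ((i : ℝ)/n))).toReal := by
      intro i hi
      have hia : (0:ℝ) ≤ (i:ℝ)/n := by positivity
      have hib : (i:ℝ)/n ≤ (x + i)/n := by
        rw [div_le_div_iff_of_pos_right hn0]
        linarith
      have := hadd ((i:ℝ)/n) ((x + i)/n) hia hib
      have htr := congrArg ENNReal.toReal this
      rw [ENNReal.toReal_add (hfin _) (hfin _)] at htr
      linarith
    have h3 : (ν (Ico 0 x)).toReal = (μ (Ico 0 x)).toReal := by
      rw [hν2, ENNReal.toReal_sum (fun i _ => hfin _), Finset.sum_congr rfl hterm,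
        ← hDinv x ⟨hx0, hx1⟩]
    exact (ENNReal.toReal_eq_toReal_iff' (measure_ne_top ν _) (measure_ne_top μ _)).1 h3
  -- ν also lives on [0,1)
  have hνcomp : ν (Ico (0:ℝ) 1)ᶜ = 0 := by
    have : T ⁻¹' (Ico (0:ℝ) 1) = univ := by
      ext y
      simp [hTdef, Int.fract_nonneg, Int.fract_lt_one]
    have h1 : ν (Ico (0:ℝ) 1) = 1 := by
      rw [hνdef, Measure.map_apply hTmeas measurableSet_Ico, this, measure_univ]
    have := measure_compl (μ := ν) (s := Ico (0:ℝ) 1) measurableSet_Ico (measure_ne_top ν _)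
    rw [h1, measure_univ] at this
    simpa using this
  have haddν : ∀ a b : ℝ, 0 ≤ a → a ≤ b →
      ν (Ico 0 a) + ν (Ico a b) = ν (Ico 0 b) := by
    intro a b ha hab
    rw [← measure_union (by simp [Set.Ico_disjoint_Ico, min_le_iff]) measurableSet_Ico,
      Ico_union_Ico_eq_Ico ha hab]
  -- measures are equal
  have hμν : μ = ν := by
    apply Measure.ext_of_Ico
    intro a b hab
    set a' := max a 0 with ha'
    set b' := min b 1 with hb'
    have hIab : Ico a b ∩ Ico 0 1 = Ico a' b' := Set.Ico_inter_Ico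
    have hμ' : μ (Ico a b) = μ (Ico a' b') := by
      rw [← measure_inter_conull hcomp, hIab]
    have hν' : ν (Ico a b) = ν (Ico a' b') := by
      rw [← measure_inter_conull hνcomp, hIab]
    rw [hμ', hν']
    rcases le_or_gt b' a' with h | h
    · rw [Ico_eq_empty (not_lt.2 h)]
      simp
    · have ha0 : 0 ≤ a' := le_max_right _ _
      have hb1 : b' ≤ 1 := min_le_right _ _
      have h1 := hadd a' b' ha0 h.le
      have h2 := haddν a' b' ha0 h.le
      have e1 : μ (Ico 0 a') = ν (Ico 0 a') :=
        (hD a' ⟨ha0, le_trans h.le hb1⟩).symm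
      have e2 : μ (Ico 0 b') = ν (Ico 0 b') :=
        (hD b' ⟨le_trans ha0 h.le, hb1⟩).symm
      have : ν (Ico 0 a') + μ (Ico a' b') = ν (Ico 0 a') + ν (Ico a' b') := by
        rw [h2, ← e1, h1, e2]
      exact (ENNReal.add_right_inj (measure_ne_top ν _)).1 this
  -- conclude via change of variables
  have hfcont : Continuous fun x : ℝ => Complex.exp (2 * π * I * k * x) := by
    fun_prop
  calc ∫ x, Complex.exp (2 * π * I * k * x) ∂μ
      = ∫ x, Complex.exp (2 * π * I * k * x) ∂ν := by rw [hμν]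
    _ = ∫ y, Complex.exp (2 * π * I * k * (T y : ℝ)) ∂μ := by
        rw [hνdef]
        exact integral_map hTmeas.aemeasurable hfcont.aestronglyMeasurable
    _ = ∫ x, Complex.exp (2 * π * I * (k * n) * x) ∂μ := by
        congr 1
        funext y
        have hfr : T y = (n:ℝ) * y - ⌊(n:ℝ) * y⌋ := rfl
        rw [hfr]
        push_cast
        rw [mul_sub, Complex.exp_sub]
        rw [show (2 * (π:ℂ) * I * k * ((⌊(n:ℝ) * y⌋ : ℤ) : ℂ)) =
          ((k * ⌊(n:ℝ) * y⌋ : ℤ) : ℂ) * (2 * π * I) by push_cast; ring,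
          Complex.exp_int_mul_two_pi_mul_I]
        rw [div_one]
        ring_nf
end

section
/- A continuous (non-atomic) Borel probability measure μ on the circle 𝕋 ≅ [0,1) is invariant under x ↦ nx mod 1 if and only if its distribution function D_μ(x) = μ[0,x) satisfies D_μ = T_n(D_μ), where T_n(g)(x) = ∑_{i=0}^{n-1} [g((x+i)/n) - g(i/n)]. -/
open MeasureTheory Set

private lemma fract_preimage_inter (n : ℕ) (hn : 0 < n) {x : ℝ} (hx0 : 0 ≤ x) (hx1 : x ≤ 1) :
    (fun t : ℝ => Int.fract ((n : ℝ) * t)) ⁻¹' Ico 0 x ∩ Ico 0 1 =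
      ⋃ i ∈ Finset.range n, Ico ((i : ℝ) / n) ((x + i) / n) := by
  have hn' : (0:ℝ) < n := by exact_mod_cast hn
  ext t
  simp only [mem_inter_iff, mem_preimage, mem_Ico, mem_iUnion, Finset.mem_range]
  constructor
  · rintro ⟨⟨hf0, hfx⟩, ht0, ht1⟩
    have h1 : (0:ℝ) ≤ (n:ℝ) * t := by positivity
    have h2 : (n:ℝ) * t < n := by nlinarith
    have hi0 : 0 ≤ ⌊(n:ℝ) * t⌋ := Int.le_floor.mpr (by exact_mod_cast h1)
    have hin : ⌊(n:ℝ) * t⌋ < (n : ℤ) := Int.floor_lt.mpr (by exact_mod_cast h2)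
    have hcast : ((⌊(n:ℝ) * t⌋.toNat : ℕ) : ℝ) = (⌊(n:ℝ) * t⌋ : ℝ) := by
      exact_mod_cast Int.toNat_of_nonneg hi0
    refine ⟨⌊(n:ℝ) * t⌋.toNat, ?_, ?_, ?_⟩
    · omega
    · rw [div_le_iff₀ hn', hcast]
      linarith [Int.floor_le ((n:ℝ) * t)]
    · rw [lt_div_iff₀ hn', hcast]
      have hfr : Int.fract ((n:ℝ) * t) = (n:ℝ) * t - ⌊(n:ℝ) * t⌋ := rfl
      rw [hfr] at hfx; linarith
  · rintro ⟨i, hin, h1, h2⟩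
    have hi1 : (i:ℝ) ≤ (n:ℝ) * t := by rw [div_le_iff₀ hn'] at h1; linarith
    have hi2 : (n:ℝ) * t < x + i := by rw [lt_div_iff₀ hn'] at h2; linarith
    have hfloor : ⌊(n:ℝ) * t⌋ = (i : ℤ) := by
      rw [Int.floor_eq_iff]
      constructor
      · exact_mod_cast hi1
      · push_cast; linarith
    have hfr : Int.fract ((n:ℝ) * t) = (n:ℝ) * t - i := by
      rw [Int.fract, hfloor]; push_cast; ring
    have hi1n : (i:ℝ) + 1 ≤ n := by exact_mod_cast Nat.succ_le_of_lt hin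
    refine ⟨⟨Int.fract_nonneg _, by rw [hfr]; linarith⟩, ?_, ?_⟩
    · have : (0:ℝ) ≤ (i:ℝ) / n := by positivity
      linarith
    · have : (x + i) / n ≤ 1 := by rw [div_le_one hn']; linarith
      linarith

private lemma Ico_toReal_sub (μ : Measure ℝ) [IsProbabilityMeasure μ] {a b : ℝ}
    (ha : 0 ≤ a) (hab : a ≤ b) :
    (μ (Ico a b)).toReal = (μ (Ico 0 b)).toReal - (μ (Ico 0 a)).toReal := by
  have hu : Ico (0:ℝ) a ∪ Ico a b = Ico 0 b := Ico_union_Ico_eq_Ico ha hab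
  have hd : Disjoint (Ico (0:ℝ) a) (Ico a b) := by
    rw [Set.Ico_disjoint_Ico]
    simp [le_max_iff, min_le_iff]
  have hm := measure_union (μ := μ) hd measurableSet_Ico
  rw [hu] at hm
  rw [hm, ENNReal.toReal_add (measure_ne_top μ _) (measure_ne_top μ _)]
  ring

/-- A continuous (non-atomic) Borel probability measure `μ` on the circle `[0,1)` is
invariant under `x ↦ n x mod 1` iff its distribution function `D_μ(x) = μ [0,x)` is
`T_n`-invariant. -/
theorem mulInvariant_iff_distribution_Tn_invariant (n : ℕ) (hn : 2 ≤ n)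
    (μ : Measure ℝ) [IsProbabilityMeasure μ] (hsupp : μ (Ico 0 1) = 1)
    (hcont : ∀ z : ℝ, μ {z} = 0) :
    Measure.map (fun x : ℝ => Int.fract (n * x)) μ = μ ↔
      ∀ x ∈ Icc (0:ℝ) 1,
        (μ (Ico 0 x)).toReal =
          ∑ i ∈ Finset.range n,
            ((μ (Ico 0 ((x + i) / n))).toReal - (μ (Ico 0 ((i : ℝ) / n))).toReal) := by
  have hn0 : 0 < n := by omega
  have hn' : (0:ℝ) < n := by exact_mod_cast hn0
  set f : ℝ → ℝ := fun t => Int.fract ((n : ℝ) * t) with hf_def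
  have hf : Measurable f := (measurable_const.mul measurable_id).fract
  have hnullc : μ (Ico (0:ℝ) 1)ᶜ = 0 := by
    rw [measure_compl measurableSet_Ico (measure_ne_top μ _), hsupp, measure_univ]
    simp
  have hrestr : ∀ s : Set ℝ, μ (s ∩ Ico 0 1) = μ s := fun s => measure_inter_conull hnullc
  -- core computation
  have hcore : ∀ x ∈ Icc (0:ℝ) 1,
      μ (f ⁻¹' Ico 0 x) = ∑ i ∈ Finset.range n, μ (Ico ((i:ℝ)/n) ((x + i)/n)) := by
    intro x hx
    rw [← hrestr (f ⁻¹' Ico 0 x), fract_preimage_inter n hn0 hx.1 hx.2]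
    refine measure_biUnion_finset ?_ (fun i _ => measurableSet_Ico)
    intro i hi j hj hij
    simp only [Function.onFun]
    rw [Set.Ico_disjoint_Ico]
    have key : ∀ i j : ℕ, i < j →
        min ((x + (i:ℝ))/n) ((x + (j:ℝ))/n) ≤ max ((i:ℝ)/n) ((j:ℝ)/n) := by
      intro i j h
      have hij1 : (i:ℝ) + 1 ≤ j := by exact_mod_cast h
      have : (x + (i:ℝ))/n ≤ (j:ℝ)/n := by
        gcongr
        linarith [hx.2]
      exact le_trans (min_le_left _ _) (le_trans this (le_max_right _ _))
    rcases lt_or_gt_of_ne hij with h | h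
    · exact key i j h
    · rw [min_comm, max_comm]; exact key j i h
  -- toReal of the sum
  have hsum : ∀ x ∈ Icc (0:ℝ) 1,
      (∑ i ∈ Finset.range n, μ (Ico ((i:ℝ)/n) ((x + i)/n))).toReal =
        ∑ i ∈ Finset.range n,
          ((μ (Ico 0 ((x + i) / n))).toReal - (μ (Ico 0 ((i : ℝ) / n))).toReal) := by
    intro x hx
    rw [ENNReal.toReal_sum (fun i _ => measure_ne_top μ _)]
    refine Finset.sum_congr rfl fun i _ => ?_
    refine Ico_toReal_sub μ (by positivity) ?_
    gcongr
    linarith [hx.1]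
  constructor
  · intro hmap x hx
    calc (μ (Ico 0 x)).toReal = (Measure.map f μ (Ico 0 x)).toReal := by rw [hmap]
      _ = (μ (f ⁻¹' Ico 0 x)).toReal := by rw [Measure.map_apply hf measurableSet_Ico]
      _ = _ := by rw [hcore x hx, hsum x hx]
  · intro hD
    haveI : IsProbabilityMeasure (Measure.map f μ) := Measure.isProbabilityMeasure_map hf.aemeasurable
    refine Measure.ext_of_Iic (Measure.map f μ) μ (fun a => ?_)
    rw [Measure.map_apply hf measurableSet_Iic]
    rcases lt_or_ge a 0 with ha | ha
    · have h1 : f ⁻¹' Iic a = ∅ := by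
        ext t
        simp only [mem_preimage, mem_Iic, mem_empty_iff_false, iff_false, not_le]
        exact lt_of_lt_of_le ha (Int.fract_nonneg _)
      have h2 : μ (Iic a) = 0 := by
        refine measure_mono_null ?_ hnullc
        intro t ht
        simp only [mem_Iic] at ht
        simp only [mem_compl_iff, mem_Ico, not_and, not_lt]
        intro h0; linarith
      rw [h1, h2, measure_empty]
    rcases lt_or_ge a 1 with ha1 | ha1
    · -- 0 ≤ a < 1
      have hmem : a ∈ Icc (0:ℝ) 1 := ⟨ha, ha1.le⟩
      have hμIic : μ (Iic a) = μ (Ico 0 a) := by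
        refine le_antisymm ?_ (measure_mono fun t ht => ht.2.le)
        calc μ (Iic a) = μ (Iic a ∩ Ico 0 1) := (hrestr _).symm
          _ ≤ μ (Ico 0 a ∪ {a}) := by
              refine measure_mono fun t ht => ?_
              rcases lt_or_eq_of_le (mem_Iic.mp ht.1) with h | h
              · exact Or.inl ⟨ht.2.1, h⟩
              · exact Or.inr (mem_singleton_iff.mpr h)
          _ ≤ μ (Ico 0 a) + μ {a} := measure_union_le _ _
          _ = μ (Ico 0 a) := by rw [hcont a, add_zero]
      have hfib : μ (f ⁻¹' {a}) = 0 := by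
        rw [← hrestr (f ⁻¹' {a})]
        refine measure_mono_null ?_
          ((measure_biUnion_null_iff (Finset.range n).countable_toSet).mpr
            (fun i _ => hcont ((a + i) / n)))
        rintro t ⟨hta, ht0, ht1⟩
        simp only [mem_preimage, mem_singleton_iff] at hta
        have h1 : (0:ℝ) ≤ (n:ℝ) * t := by positivity
        have h2 : (n:ℝ) * t < n := by nlinarith
        have hi0 : 0 ≤ ⌊(n:ℝ) * t⌋ := Int.le_floor.mpr (by exact_mod_cast h1)
        have hin : ⌊(n:ℝ) * t⌋ < (n : ℤ) := Int.floor_lt.mpr (by exact_mod_cast h2)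
        have hcast : ((⌊(n:ℝ) * t⌋.toNat : ℕ) : ℝ) = (⌊(n:ℝ) * t⌋ : ℝ) := by
          exact_mod_cast Int.toNat_of_nonneg hi0
        simp only [mem_iUnion, Finset.mem_range, mem_singleton_iff]
        refine ⟨⌊(n:ℝ) * t⌋.toNat, ?_, ?_⟩
        · exact Finset.mem_coe.mpr (Finset.mem_range.mpr (by omega))
        have hfr : Int.fract ((n:ℝ) * t) = (n:ℝ) * t - ⌊(n:ℝ) * t⌋ := rfl
        rw [hf_def] at hta
        simp only [hfr] at hta
        rw [eq_div_iff (ne_of_gt hn'), hcast]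
        linarith
      have hνIic : μ (f ⁻¹' Iic a) = μ (f ⁻¹' Ico 0 a) := by
        refine le_antisymm ?_ (measure_mono (preimage_mono fun t ht => ht.2.le))
        calc μ (f ⁻¹' Iic a) ≤ μ (f ⁻¹' Ico 0 a ∪ f ⁻¹' {a}) := by
              refine measure_mono fun t ht => ?_
              simp only [mem_preimage, mem_Iic] at ht
              rcases lt_or_eq_of_le ht with h | h
              · exact Or.inl ⟨Int.fract_nonneg _, h⟩
              · exact Or.inr h
          _ ≤ μ (f ⁻¹' Ico 0 a) + μ (f ⁻¹' {a}) := measure_union_le _ _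
          _ = μ (f ⁻¹' Ico 0 a) := by rw [hfib, add_zero]
      rw [hνIic, hμIic, hcore a hmem]
      have hne1 : ∑ i ∈ Finset.range n, μ (Ico ((i:ℝ)/n) ((a + i)/n)) ≠ ⊤ :=
        (ENNReal.sum_lt_top.mpr (fun i _ => measure_lt_top μ _)).ne
      refine ((ENNReal.toReal_eq_toReal_iff' hne1 (measure_ne_top μ _)).mp ?_)
      rw [hsum a hmem]
      exact (hD a hmem).symm
    · -- a ≥ 1
      have h1 : f ⁻¹' Iic a = univ := by
        ext t
        simp only [mem_preimage, mem_Iic, mem_univ, iff_true]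
        exact le_trans (Int.fract_lt_one _).le ha1
      have h2 : μ (Iic a) = 1 := by
        refine le_antisymm prob_le_one ?_
        rw [← hsupp]
        exact measure_mono fun t ht => le_trans ht.2.le ha1
      rw [h1, h2, measure_univ]
end

section
/- Let Σ be a multiplicative subsemigroup of the positive integers and let C_Σ[0,1] be the space of continuous functions f on [0,1] with T_n(f) = f for all n ∈ Σ. If dim C_Σ[0,1] = 1, then the Lebesgue measure is the only continuous (non-atomic) Σ-invariant Borel probability measure on the circle. -/
open MeasureTheory Set Function ProbabilityTheory

/-!
The distribution function `D_μ = cdf μ` of a continuous invariant measure is a continuous fixed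
point of every `T_n`, `n ∈ Σ`: the preimage of `[0, x)` under `y ↦ n y mod 1` is the disjoint
union of the intervals `[j/n, (x + j)/n)`, so invariance of `μ` says exactly `T_n D_μ = D_μ`.
Hence `D_μ` lies in the one-dimensional space `C_Σ[0,1]`, so `D_μ(x) = c x`, and `D_μ(1) = 1`
forces `D_μ(x) = x`, the distribution function of Lebesgue measure.
-/

/-- The operator `T_n` of the paper. -/
noncomputable def transferOp (n : ℕ) (f : ℝ → ℝ) (x : ℝ) : ℝ :=
  ∑ j ∈ Finset.range n, (f ((x + j) / n) - f ((j : ℝ) / n))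

namespace ProbabilityTheory

variable (μ : Measure ℝ) [IsProbabilityMeasure μ]

theorem continuous_cdf [NullSingletonClass μ] : Continuous (cdf μ) := by
  refine continuous_iff_continuousAt.2 fun x => ?_
  have hleft : leftLim (cdf μ) x = cdf μ x := by
    have h := (cdf μ).measure_singleton x
    rw [measure_cdf, measure_singleton, eq_comm, ENNReal.ofReal_eq_zero] at h
    linarith [(monotone_cdf μ).leftLim_le (le_refl x)]
  rw [(monotone_cdf μ).continuousAt_iff_leftLim_eq_rightLim, hleft, (cdf μ).rightLim_eq]

theorem cdf_sub_cdf {a b : ℝ} (hab : a ≤ b) : cdf μ b - cdf μ a = μ.real (Ioc a b) := by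
  have h := (cdf μ).measure_Ioc a b
  rw [measure_cdf] at h
  rw [measureReal_def, h, ENNReal.toReal_ofReal (sub_nonneg.2 (monotone_cdf μ hab))]

variable {μ}

theorem eq_of_cdf_eqOn_Icc {ν : Measure ℝ} [IsProbabilityMeasure ν] {a b : ℝ} (hab : a ≤ b)
    (ha : cdf ν a = 0) (hb : cdf ν b = 1) (h : EqOn (cdf μ) (cdf ν) (Icc a b)) : μ = ν := by
  have hzero : ∀ ρ : Measure ℝ, cdf ρ a = 0 → ∀ x ≤ a, cdf ρ x = 0 := fun ρ hρ x hx =>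
    le_antisymm (hρ ▸ monotone_cdf ρ hx) (cdf_nonneg ρ x)
  have hone : ∀ ρ : Measure ℝ, cdf ρ b = 1 → ∀ x ≥ b, cdf ρ x = 1 := fun ρ hρ x hx =>
    le_antisymm (cdf_le_one ρ x) (hρ ▸ monotone_cdf ρ hx)
  have ha' : cdf μ a = 0 := (h ⟨le_rfl, hab⟩).trans ha
  have hb' : cdf μ b = 1 := (h ⟨hab, le_rfl⟩).trans hb
  refine Measure.eq_of_cdf μ ν (StieltjesFunction.ext fun x => ?_)
  rcases le_total x a with hxa | hax
  · rw [hzero μ ha' x hxa, hzero ν ha x hxa]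
  rcases le_total x b with hxb | hbx
  · exact h ⟨hax, hxb⟩
  · rw [hone μ hb' x hbx, hone ν hb x hbx]

theorem cdf_zero_of_measure_compl_Ico_zero_one [NullSingletonClass μ]
    (hμ : μ (Ico 0 1)ᶜ = 0) : cdf μ 0 = 0 := by
  have hsub : Iio (0 : ℝ) ⊆ (Ico 0 1)ᶜ := fun y hy hy' => not_le.2 hy hy'.1
  have hIio : μ (Iio 0) = 0 := measure_mono_null hsub hμ
  rw [cdf_eq_real, ← measureReal_congr Iio_ae_eq_Iic, measureReal_def, hIio, ENNReal.toReal_zero]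

theorem cdf_one_of_measure_compl_Ico_zero_one (hμ : μ (Ico 0 1)ᶜ = 0) : cdf μ 1 = 1 := by
  have hIic : μ (Iic 1)ᶜ = 0 :=
    measure_mono_null (compl_subset_compl.2 fun y hy => hy.2.le) hμ
  rw [cdf_eq_real, measureReal_def, (prob_compl_eq_zero_iff measurableSet_Iic).1 hIic,
    ENNReal.toReal_one]

end ProbabilityTheory

instance : IsProbabilityMeasure (volume.restrict (Ico (0 : ℝ) 1)) :=
  ⟨by simp⟩

theorem cdf_volume_restrict_Ico_zero_one {x : ℝ} (hx : x ∈ Icc (0 : ℝ) 1) :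
    cdf (volume.restrict (Ico 0 1)) x = x := by
  have hset : Iic x ∩ Icc 0 1 = Icc 0 x := by
    ext y
    simp only [mem_inter_iff, mem_Iic, mem_Icc]
    constructor
    · rintro ⟨hyx, hy0, -⟩
      exact ⟨hy0, hyx⟩
    · rintro ⟨hy0, hyx⟩
      exact ⟨hyx, hy0, hyx.trans hx.2⟩
  rw [cdf_eq_real, measureReal_def, restrict_Ico_eq_restrict_Icc,
    Measure.restrict_apply measurableSet_Iic, hset, Real.volume_Icc, sub_zero,
    ENNReal.toReal_ofReal hx.1]

theorem mem_Ico_div_iff_floor_eq {n x y : ℝ} (hn : 0 < n) (hx : x ≤ 1) (j : ℤ) :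
    y ∈ Ico (j / n) ((x + j) / n) ↔ ⌊n * y⌋ = j ∧ Int.fract (n * y) < x := by
  rw [mem_Ico, div_le_iff₀ hn, lt_div_iff₀ hn, Int.fract]
  constructor
  · rintro ⟨hjy, hyx⟩
    have hfloor : ⌊n * y⌋ = j := Int.floor_eq_iff.2 ⟨by linarith, by linarith⟩
    exact ⟨hfloor, by rw [hfloor]; linarith⟩
  · rintro ⟨hfloor, hfract⟩
    have hle := Int.floor_le (n * y)
    rw [hfloor] at hle hfract
    constructor <;> linarith

theorem fract_mul_preimage_Ico_inter_Ico {n : ℕ} (hn : 0 < n) {x : ℝ} (hx : x ≤ 1) :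
    (fun y : ℝ => Int.fract (n * y)) ⁻¹' Ico 0 x ∩ Ico 0 1 =
      ⋃ j ∈ Finset.range n, Ico ((j : ℝ) / n) ((x + j) / n) := by
  have hn' : (0 : ℝ) < n := Nat.cast_pos.2 hn
  ext y
  have hmem : ∀ j : ℕ, y ∈ Ico ((j : ℝ) / n) ((x + j) / n) ↔
      ⌊n * y⌋ = j ∧ Int.fract (n * y) < x := fun j => by
    simpa only [Int.cast_natCast] using mem_Ico_div_iff_floor_eq hn' hx j
  simp only [mem_inter_iff, mem_preimage, mem_Ico, mem_iUnion, Finset.mem_range, exists_prop,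
    hmem, Int.fract_nonneg, true_and]
  constructor
  · rintro ⟨hfract, hy0, hy1⟩
    obtain ⟨j, hj⟩ := Int.eq_ofNat_of_zero_le (Int.floor_nonneg.2 (by positivity : 0 ≤ n * y))
    have hjn : (j : ℤ) < n := hj ▸ Int.floor_lt.2 (by push_cast; nlinarith)
    exact ⟨j, by omega, hj, hfract⟩
  · rintro ⟨j, hjn, hfloor, hfract⟩
    have hle := Int.floor_le ((n : ℝ) * y)
    have hlt := Int.lt_floor_add_one ((n : ℝ) * y)
    rw [hfloor] at hle hlt
    have hjn' : (j : ℝ) + 1 ≤ n := by exact_mod_cast hjn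
    push_cast at hle hlt
    exact ⟨hfract, by nlinarith, by nlinarith⟩

theorem measure_Ico_eq_sum_of_map_fract_mul_eq {μ : Measure ℝ} (hμ : μ (Ico 0 1)ᶜ = 0)
    {n : ℕ} (hn : 0 < n) (hinv : μ.map (fun y : ℝ => Int.fract (n * y)) = μ)
    {x : ℝ} (hx : x ≤ 1) :
    μ (Ico 0 x) = ∑ j ∈ Finset.range n, μ (Ico ((j : ℝ) / n) ((x + j) / n)) := by
  have hdisj : Pairwise (Disjoint on fun j : ℕ => Ico ((j : ℝ) / n) ((x + j) / n)) := by
    intro i j hij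
    refine disjoint_left.2 fun y hi hj => hij ?_
    have hn' : (0 : ℝ) < n := Nat.cast_pos.2 hn
    have hfloor : ∀ k : ℕ, y ∈ Ico ((k : ℝ) / n) ((x + k) / n) → ⌊n * y⌋ = k := fun k hk =>
      ((mem_Ico_div_iff_floor_eq hn' hx k).1 (by simpa only [Int.cast_natCast] using hk)).1
    exact_mod_cast (hfloor i hi).symm.trans (hfloor j hj)
  calc μ (Ico 0 x) = μ ((fun y : ℝ => Int.fract (n * y)) ⁻¹' Ico 0 x) := by
        conv_lhs => rw [← hinv]
        exact Measure.map_apply (measurable_fract.comp (measurable_const_mul _)) measurableSet_Ico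
    _ = μ ((fun y : ℝ => Int.fract (n * y)) ⁻¹' Ico 0 x ∩ Ico 0 1) :=
        (measure_inter_conull hμ).symm
    _ = ∑ j ∈ Finset.range n, μ (Ico ((j : ℝ) / n) ((x + j) / n)) := by
        rw [fract_mul_preimage_Ico_inter_Ico hn hx,
          measure_biUnion_finset (hdisj.set_pairwise _) fun _ _ => measurableSet_Ico]

theorem transferOp_cdf {μ : Measure ℝ} [IsProbabilityMeasure μ] [NullSingletonClass μ]
    (hμ : μ (Ico 0 1)ᶜ = 0) {n : ℕ} (hn : 0 < n)
    (hinv : μ.map (fun y : ℝ => Int.fract (n * y)) = μ) {x : ℝ} (hx : x ∈ Icc (0 : ℝ) 1) :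
    transferOp n (cdf μ) x = cdf μ x := by
  have hpiece : ∀ a b : ℝ, a ≤ b → cdf μ b - cdf μ a = μ.real (Ico a b) := fun a b hab => by
    rw [cdf_sub_cdf μ hab, measureReal_congr Ico_ae_eq_Ioc]
  have hj : ∀ j ∈ Finset.range n, (j : ℝ) / n ≤ (x + j) / n := fun j _ => by
    gcongr; linarith [hx.1]
  calc transferOp n (cdf μ) x = ∑ j ∈ Finset.range n, μ.real (Ico ((j : ℝ) / n) ((x + j) / n)) :=
        Finset.sum_congr rfl fun j hjn => hpiece _ _ (hj j hjn)
    _ = μ.real (Ico 0 x) := by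
        rw [measureReal_def, measure_Ico_eq_sum_of_map_fract_mul_eq hμ hn hinv hx.2,
          ENNReal.toReal_sum fun _ _ => measure_ne_top μ _]
        rfl
    _ = cdf μ x := by
        rw [← hpiece 0 x hx.1, cdf_zero_of_measure_compl_Ico_zero_one hμ, sub_zero]

theorem lebesgue_unique_of_dim_one_general (S : Set ℕ)
    (hpos : ∀ n ∈ S, 0 < n)
    (hdim : ∀ f : ℝ → ℝ, ContinuousOn f (Icc 0 1) →
      (∀ n ∈ S, ∀ x ∈ Icc (0:ℝ) 1,
        ∑ j ∈ Finset.range n, (f ((x + j) / n) - f ((j : ℝ) / n)) = f x) →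
      ∃ c : ℝ, ∀ x ∈ Icc (0:ℝ) 1, f x = c * x) :
    ∀ μ : Measure ℝ, IsProbabilityMeasure μ → μ (Ico 0 1) = 1 →
      (∀ z : ℝ, μ {z} = 0) →
      (∀ n ∈ S, Measure.map (fun x : ℝ => Int.fract (n * x)) μ = μ) →
      μ = volume.restrict (Ico 0 1) := by
  intro μ _ hfull hcont hinv
  have : NullSingletonClass μ := ⟨hcont⟩
  have hμ : μ (Ico 0 1)ᶜ = 0 := (prob_compl_eq_zero_iff measurableSet_Ico).2 hfull
  obtain ⟨c, hc⟩ := hdim (cdf μ) (continuous_cdf μ).continuousOn fun n hn x hx =>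
    transferOp_cdf hμ (hpos n hn) (hinv n hn) hx
  have hc1 : c = 1 := by
    simpa [cdf_one_of_measure_compl_Ico_zero_one hμ] using (hc 1 ⟨zero_le_one, le_rfl⟩).symm
  have hunif : ∀ x ∈ Icc (0 : ℝ) 1, cdf (volume.restrict (Ico 0 1)) x = x :=
    fun x hx => cdf_volume_restrict_Ico_zero_one hx
  refine eq_of_cdf_eqOn_Icc zero_le_one (hunif 0 ⟨le_rfl, zero_le_one⟩)
    (hunif 1 ⟨zero_le_one, le_rfl⟩) fun x hx => ?_
  rw [hc x hx, hc1, one_mul, hunif x hx]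

/-- If the space `C_Σ[0,1]` of continuous `Σ`-invariant functions is one-dimensional
(equivalently, since `x ↦ x` belongs to it, every member is a scalar multiple of the
identity), then Lebesgue measure is the only continuous `Σ`-invariant probability measure
on the circle `[0,1)`. -/
theorem lebesgue_unique_of_dim_one (S : Set ℕ)
    (hsub : ∀ n ∈ S, ∀ m ∈ S, n * m ∈ S) (hpos : ∀ n ∈ S, 0 < n)
    (hdim : ∀ f : ℝ → ℝ, ContinuousOn f (Icc 0 1) →
      (∀ n ∈ S, ∀ x ∈ Icc (0:ℝ) 1,
        ∑ j ∈ Finset.range n, (f ((x + j) / n) - f ((j : ℝ) / n)) = f x) →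
      ∃ c : ℝ, ∀ x ∈ Icc (0:ℝ) 1, f x = c * x) :
    ∀ μ : Measure ℝ, IsProbabilityMeasure μ → μ (Ico 0 1) = 1 →
      (∀ z : ℝ, μ {z} = 0) →
      (∀ n ∈ S, Measure.map (fun x : ℝ => Int.fract (n * x)) μ = μ) →
      μ = volume.restrict (Ico 0 1) :=
  lebesgue_unique_of_dim_one_general S hpos hdim
end

section
/- The Cantor function c satisfies T_3(c) = c, i.e., c(x) = [c(x/3) + c((x+1)/3) + c((x+2)/3)] - [c(0) + c(1/3) + c(2/3)] for all x ∈ [0,1]. -/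
/-- The `(n+1)`-st ternary digit of `x ∈ [0,1)` (floor expansion). -/
noncomputable def cantorDigit (x : ℝ) (n : ℕ) : ℕ := (⌊x * 3 ^ (n + 1)⌋ % 3).toNat

open Classical in
/-- The standard Cantor–Lebesgue function: express `x` in base `3`, replace every digit
after the first `1` by `0`, replace all `2`s by `1`s, and read the result in base `2`. -/
noncomputable def cantorFun (x : ℝ) : ℝ :=
  if 1 ≤ x then 1
  else if x < 0 then 0
  else ∑' n : ℕ,
    (if ∀ k < n, cantorDigit x k ≠ 1 then
        (if cantorDigit x n = 1 then 1 else (cantorDigit x n : ℝ) / 2)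
      else 0) / 2 ^ (n + 1)

open Classical in
noncomputable def cantorTerm (x : ℝ) (n : ℕ) : ℝ :=
  (if ∀ k < n, cantorDigit x k ≠ 1 then
      (if cantorDigit x n = 1 then 1 else (cantorDigit x n : ℝ) / 2)
    else 0) / 2 ^ (n + 1)

lemma cantorDigit_le (x : ℝ) (n : ℕ) : cantorDigit x n ≤ 2 := by
  have h : ⌊x * 3 ^ (n + 1)⌋ % 3 < 3 := Int.emod_lt_of_pos _ (by norm_num)
  unfold cantorDigit
  omega

lemma cantorTerm_nonneg (x : ℝ) (n : ℕ) : 0 ≤ cantorTerm x n := by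
  unfold cantorTerm
  positivity

lemma cantorTerm_le (x : ℝ) (n : ℕ) : cantorTerm x n ≤ (1/2) ^ (n+1) := by
  unfold cantorTerm
  have h := cantorDigit_le x n
  have : (if ∀ k < n, cantorDigit x k ≠ 1 then
      (if cantorDigit x n = 1 then 1 else (cantorDigit x n : ℝ) / 2)
    else 0) ≤ 1 := by
    split_ifs with h1 h2
    · exact le_refl 1
    · have : (cantorDigit x n : ℝ) ≤ 2 := by exact_mod_cast h
      linarith
    · norm_num
  rw [div_pow, one_pow]
  gcongr

lemma cantorTerm_summable (x : ℝ) : Summable (cantorTerm x) := by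
  apply Summable.of_nonneg_of_le (cantorTerm_nonneg x) (cantorTerm_le x)
  exact (summable_geometric_of_lt_one (by norm_num) (by norm_num)).comp_injective Nat.succ_injective


lemma cantorFun_eq_tsum {x : ℝ} (h0 : 0 ≤ x) (h1 : x < 1) :
    cantorFun x = ∑' n, cantorTerm x n := by
  rw [cantorFun, if_neg (by linarith), if_neg (by linarith)]
  rfl

lemma digit_div3_zero {x : ℝ} (h0 : 0 ≤ x) (h1 : x < 1) : cantorDigit (x/3) 0 = 0 := by
  have : x / 3 * 3 ^ (0+1) = x := by ring
  rw [cantorDigit, this, Int.floor_eq_zero_iff.2 ⟨h0, h1⟩]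
  rfl

lemma digit_div3_succ (x : ℝ) (n : ℕ) : cantorDigit (x/3) (n+1) = cantorDigit x n := by
  have : x / 3 * 3 ^ (n+1+1) = x * 3 ^ (n+1) := by
    rw [pow_succ]; ring
  rw [cantorDigit, this, cantorDigit]

lemma digit_add1_div3_zero {x : ℝ} (h0 : 0 ≤ x) (h1 : x < 1) :
    cantorDigit ((x+1)/3) 0 = 1 := by
  have e : (x+1) / 3 * 3 ^ (0+1) = x + 1 := by ring
  have : ⌊x + (1:ℝ)⌋ = 1 := by
    rw [show (1:ℝ) = ((1:ℤ):ℝ) by norm_num, Int.floor_add_intCast,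
      Int.floor_eq_zero_iff.2 ⟨h0, h1⟩]
    norm_num
  rw [cantorDigit, e, this]
  rfl

lemma digit_add2_div3_zero {x : ℝ} (h0 : 0 ≤ x) (h1 : x < 1) :
    cantorDigit ((x+2)/3) 0 = 2 := by
  have e : (x+2) / 3 * 3 ^ (0+1) = x + 2 := by ring
  have : ⌊x + (2:ℝ)⌋ = 2 := by
    rw [show (2:ℝ) = ((2:ℤ):ℝ) by norm_num, Int.floor_add_intCast,
      Int.floor_eq_zero_iff.2 ⟨h0, h1⟩]
    norm_num
  rw [cantorDigit, e, this]
  rfl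

lemma digit_add2_div3_succ (x : ℝ) (n : ℕ) :
    cantorDigit ((x+2)/3) (n+1) = cantorDigit x n := by
  have e : (x+2) / 3 * 3 ^ (n+1+1) = x * 3 ^ (n+1) + ((2 * 3 ^ (n+1) : ℤ) : ℝ) := by
    push_cast; rw [pow_succ]; ring
  rw [cantorDigit, e, Int.floor_add_intCast, cantorDigit]
  congr 1
  omega

lemma digit_add1_div3_succ (x : ℝ) (n : ℕ) :
    cantorDigit ((x+1)/3) (n+1) = cantorDigit x n := by
  have e : (x+1) / 3 * 3 ^ (n+1+1) = x * 3 ^ (n+1) + ((3 ^ (n+1) : ℤ) : ℝ) := by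
    push_cast; rw [pow_succ]; ring
  rw [cantorDigit, e, Int.floor_add_intCast, cantorDigit]
  congr 1
  omega

lemma term_div3_zero {x : ℝ} (h0 : 0 ≤ x) (h1 : x < 1) : cantorTerm (x/3) 0 = 0 := by
  rw [cantorTerm, if_pos (by intro k hk; omega), if_neg (by rw [digit_div3_zero h0 h1]; norm_num),
    digit_div3_zero h0 h1]
  norm_num

lemma term_div3_succ {x : ℝ} (h0 : 0 ≤ x) (h1 : x < 1) (n : ℕ) :
    cantorTerm (x/3) (n+1) = cantorTerm x n / 2 := by
  have hc : (∀ k < n+1, cantorDigit (x/3) k ≠ 1) ↔ (∀ k < n, cantorDigit x k ≠ 1) := by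
    constructor
    · intro h k hk
      rw [← digit_div3_succ]
      exact h (k+1) (by omega)
    · intro h k hk
      match k with
      | 0 => rw [digit_div3_zero h0 h1]; norm_num
      | m+1 => rw [digit_div3_succ]; exact h m (by omega)
  rw [cantorTerm, cantorTerm, digit_div3_succ, if_congr hc rfl rfl, pow_succ, ← div_div]

lemma term_add1_zero {x : ℝ} (h0 : 0 ≤ x) (h1 : x < 1) : cantorTerm ((x+1)/3) 0 = 1/2 := by
  rw [cantorTerm, if_pos (by intro k hk; omega), if_pos (digit_add1_div3_zero h0 h1)]
  norm_num

lemma term_add1_succ {x : ℝ} (h0 : 0 ≤ x) (h1 : x < 1) (n : ℕ) :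
    cantorTerm ((x+1)/3) (n+1) = 0 := by
  rw [cantorTerm, if_neg, zero_div]
  intro h
  exact h 0 (by omega) (digit_add1_div3_zero h0 h1)

lemma term_add2_zero {x : ℝ} (h0 : 0 ≤ x) (h1 : x < 1) : cantorTerm ((x+2)/3) 0 = 1/2 := by
  rw [cantorTerm, if_pos (by intro k hk; omega),
    if_neg (by rw [digit_add2_div3_zero h0 h1]; norm_num), digit_add2_div3_zero h0 h1]
  norm_num

lemma term_add2_succ {x : ℝ} (h0 : 0 ≤ x) (h1 : x < 1) (n : ℕ) :
    cantorTerm ((x+2)/3) (n+1) = cantorTerm x n / 2 := by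
  have hc : (∀ k < n+1, cantorDigit ((x+2)/3) k ≠ 1) ↔ (∀ k < n, cantorDigit x k ≠ 1) := by
    constructor
    · intro h k hk
      rw [← digit_add2_div3_succ]
      exact h (k+1) (by omega)
    · intro h k hk
      match k with
      | 0 => rw [digit_add2_div3_zero h0 h1]; norm_num
      | m+1 => rw [digit_add2_div3_succ]; exact h m (by omega)
  rw [cantorTerm, cantorTerm, digit_add2_div3_succ, if_congr hc rfl rfl, pow_succ, ← div_div]

lemma cf_div3 {x : ℝ} (h0 : 0 ≤ x) (h1 : x < 1) : cantorFun (x/3) = cantorFun x / 2 := by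
  rw [cantorFun_eq_tsum (by positivity) (by linarith), cantorFun_eq_tsum h0 h1,
    Summable.tsum_eq_zero_add (cantorTerm_summable _), term_div3_zero h0 h1, zero_add]
  simp only [term_div3_succ h0 h1]
  exact tsum_div_const

lemma cf_add1 {x : ℝ} (h0 : 0 ≤ x) (h1 : x < 1) : cantorFun ((x+1)/3) = 1/2 := by
  rw [cantorFun_eq_tsum (by positivity) (by linarith), Summable.tsum_eq_zero_add (cantorTerm_summable _),
    term_add1_zero h0 h1]
  simp only [term_add1_succ h0 h1]
  rw [tsum_zero, add_zero]

lemma cf_add2 {x : ℝ} (h0 : 0 ≤ x) (h1 : x < 1) :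
    cantorFun ((x+2)/3) = 1/2 + cantorFun x / 2 := by
  rw [cantorFun_eq_tsum (by positivity) (by linarith), cantorFun_eq_tsum h0 h1,
    Summable.tsum_eq_zero_add (cantorTerm_summable _), term_add2_zero h0 h1]
  simp only [term_add2_succ h0 h1]
  rw [tsum_div_const]

lemma cf_zero : cantorFun 0 = 0 := by
  rw [cantorFun_eq_tsum le_rfl one_pos]
  have : ∀ n, cantorTerm 0 n = 0 := by
    intro n
    have hd : cantorDigit 0 n = 0 := by
      rw [cantorDigit, zero_mul, Int.floor_zero]
      rfl
    rw [cantorTerm, hd]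
    norm_num
  simp only [this, tsum_zero]

lemma cf_third : cantorFun (1/3) = 1/2 := by
  have := cf_add1 (le_refl (0:ℝ)) one_pos
  norm_num at this
  exact this

lemma cf_twothird : cantorFun (2/3) = 1/2 := by
  have := cf_add2 (le_refl (0:ℝ)) one_pos
  rw [cf_zero] at this
  norm_num at this
  exact this

theorem cantorFun_T3_invariant :
    ∀ x ∈ Set.Icc (0:ℝ) 1,
      cantorFun x =
        (cantorFun (x / 3) + cantorFun ((x + 1) / 3) + cantorFun ((x + 2) / 3)) -
          (cantorFun 0 + cantorFun (1 / 3) + cantorFun (2 / 3)) := by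
  rintro x ⟨hx0, hx1⟩
  rw [cf_zero, cf_third, cf_twothird]
  rcases lt_or_eq_of_le hx1 with h | h
  · rw [cf_div3 hx0 h, cf_add1 hx0 h, cf_add2 hx0 h]
    ring
  · subst h
    rw [show (1:ℝ)/3 = 1/3 from rfl]
    have h1 : cantorFun 1 = 1 := by rw [cantorFun, if_pos le_rfl]
    have h2 : cantorFun ((1+1)/3) = 1/2 := by norm_num [cf_twothird]
    have h3 : cantorFun ((1+2)/3) = 1 := by norm_num [h1]
    rw [h1, h2, h3, cf_third]
    ring
end

section
/- Let p, q ≥ 2 with log p / log q irrational, and let μ be a continuous (non-atomic) ergodic ×p,×q-invariant Borel probability measure on 𝕋 ≅ [0,1). Then there exists an irrational x ∈ [0,1) such that (1/N²) ∑_{i=0}^{N-1} ∑_{j=0}^{N-1} δ_{p^i q^j x mod 1} converges to μ in the weak-* topology as N → ∞. -/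
/-!
Write `T = ×p` and `S = ×q`; they commute and preserve `μ`. For a bounded measurable `φ`,
Birkhoff's theorem for `S` (proved from Garsia's maximal inequality) gives an `S`-invariant limit
`g` of the inner averages, and Maker's variant of Birkhoff's theorem for `T` shows that the square
averages `N⁻² ∑ φ (T^i S^j z)` have the same limit as the `T`-averages of `g`. That limit is
invariant under both `T` and `S`, hence a.e. constant by ergodicity, and equals `∫ φ dμ`.
Applying this to a dense sequence of continuous functions, and using that the averaging
functionals are 1-Lipschitz, yields a full-measure set of generic points. As `μ` has no atoms,
the countably many rational points form a null set, so some generic point is irrational.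
-/

open MeasureTheory Filter Topology Finset

section LimsupOfBoundedFunctions

variable {ι : Type*} {l : Filter ι} {u v : ι → ℝ}

lemma limsup_le_limsup_of_tendsto_sub [l.NeBot]
    (hv : IsBoundedUnder (· ≤ ·) l fun i => |v i|) (h : Tendsto (fun i => u i - v i) l (𝓝 0)) :
    limsup u l ≤ limsup v l := by
  obtain ⟨hv_le, hv_ge⟩ := isBoundedUnder_le_abs.1 hv
  calc limsup u l = limsup (v + fun i => u i - v i) l := by congr 1; ext; simp
    _ ≤ limsup v l + limsup (fun i => u i - v i) l :=
      limsup_add_le hv_ge hv_le h.isBoundedUnder_ge.isCoboundedUnder_le h.isBoundedUnder_le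
    _ = limsup v l := by rw [h.limsup_eq, add_zero]

lemma limsup_eq_limsup_of_tendsto_sub [l.NeBot]
    (hu : IsBoundedUnder (· ≤ ·) l fun i => |u i|) (hv : IsBoundedUnder (· ≤ ·) l fun i => |v i|)
    (h : Tendsto (fun i => u i - v i) l (𝓝 0)) : limsup u l = limsup v l :=
  (limsup_le_limsup_of_tendsto_sub hv h).antisymm <|
    limsup_le_limsup_of_tendsto_sub hu <| by simpa using h.neg

lemma limsup_add_limsup_neg_nonneg [l.NeBot] (hu : IsBoundedUnder (· ≤ ·) l fun i => |u i|) :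
    0 ≤ limsup u l + limsup (fun i => -u i) l := by
  obtain ⟨hu_le, hu_ge⟩ := isBoundedUnder_le_abs.1 hu
  calc (0 : ℝ) = limsup (fun _ => (0 : ℝ)) l := limsup_const 0 |>.symm
    _ = limsup (u + fun i => -u i) l := by congr 1; ext; simp
    _ ≤ limsup u l + limsup (fun i => -u i) l :=
      limsup_add_le hu_ge hu_le (isBoundedUnder_ge_neg.2 hu_le).isCoboundedUnder_le
        (isBoundedUnder_le_neg.2 hu_ge)

lemma tendsto_limsup_of_limsup_add_limsup_neg_nonpos
    (hu : IsBoundedUnder (· ≤ ·) l fun i => |u i|)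
    (h : limsup u l + limsup (fun i => -u i) l ≤ 0) : Tendsto u l (𝓝 (limsup u l)) := by
  obtain ⟨hu_le, hu_ge⟩ := isBoundedUnder_le_abs.1 hu
  refine tendsto_order.2 ⟨fun a ha => ?_, fun a ha => eventually_lt_of_limsup_lt ha hu_le⟩
  have : limsup (fun i => -u i) l < -a := by linarith
  filter_upwards [eventually_lt_of_limsup_lt this (isBoundedUnder_le_neg.2 hu_ge)] with i hi
  simpa using hi

end LimsupOfBoundedFunctions

section BirkhoffAverages

variable {α : Type*} {f : α → α} {g : α → ℝ} {C : ℝ}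

lemma measurable_birkhoffSum [MeasurableSpace α] (hf : Measurable f) (hg : Measurable g)
    (n : ℕ) : Measurable (birkhoffSum f g n) :=
  Finset.measurable_sum _ fun k _ => hg.comp (hf.iterate k)

lemma measurable_birkhoffAverage [MeasurableSpace α] (hf : Measurable f) (hg : Measurable g)
    (n : ℕ) : Measurable (birkhoffAverage ℝ f g n) :=
  (measurable_birkhoffSum hf hg n).const_smul ((n : ℝ)⁻¹)

lemma abs_birkhoffAverage_le_birkhoffAverage {h : α → ℝ} (hgh : ∀ x, |g x| ≤ h x) (n : ℕ)
    (x : α) : |birkhoffAverage ℝ f g n x| ≤ birkhoffAverage ℝ f h n x := by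
  simp only [birkhoffAverage, birkhoffSum, smul_eq_mul, abs_mul, abs_inv, Nat.abs_cast]
  gcongr
  exact (abs_sum_le_sum_abs _ _).trans (sum_le_sum fun k _ => hgh _)

lemma abs_birkhoffAverage_le (hg : ∀ x, |g x| ≤ C) (n : ℕ) (x : α) :
    |birkhoffAverage ℝ f g n x| ≤ C := by
  refine (abs_birkhoffAverage_le_birkhoffAverage hg n x).trans ?_
  rcases eq_or_ne n 0 with rfl | hn
  · simpa using (abs_nonneg _).trans (hg x)
  · simp [birkhoffAverage, birkhoffSum, hn]

lemma isBoundedUnder_abs_birkhoffAverage (hg : ∀ x, |g x| ≤ C) (x : α) :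
    IsBoundedUnder (· ≤ ·) atTop fun n => |birkhoffAverage ℝ f g n x| :=
  isBoundedUnder_of ⟨C, fun n => abs_birkhoffAverage_le hg n x⟩

noncomputable def birkhoffLimsup (f : α → α) (g : α → ℝ) (x : α) : ℝ :=
  limsup (birkhoffAverage ℝ f g · x) atTop

lemma abs_birkhoffLimsup_le (hg : ∀ x, |g x| ≤ C) (x : α) : |birkhoffLimsup f g x| ≤ C := by
  obtain ⟨h_le, h_ge⟩ :=
    isBoundedUnder_le_abs.1 (isBoundedUnder_abs_birkhoffAverage (f := f) hg x)
  have hbound n := abs_le.1 (abs_birkhoffAverage_le (f := f) hg n x)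
  exact abs_le.2 ⟨le_limsup_of_frequently_le (Frequently.of_forall fun n => (hbound n).1) h_le,
    limsup_le_of_le h_ge.isCoboundedUnder_le (Eventually.of_forall fun n => (hbound n).2)⟩

lemma measurable_birkhoffLimsup [MeasurableSpace α] (hf : Measurable f) (hg : Measurable g) :
    Measurable (birkhoffLimsup f g) :=
  Measurable.limsup fun n => measurable_birkhoffAverage hf hg n

lemma birkhoffLimsup_comp (hg : ∀ x, |g x| ≤ C) :
    birkhoffLimsup f g ∘ f = birkhoffLimsup f g := by
  ext x
  refine limsup_eq_limsup_of_tendsto_sub (isBoundedUnder_abs_birkhoffAverage hg _)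
    (isBoundedUnder_abs_birkhoffAverage hg x)
    (tendsto_birkhoffAverage_apply_sub_birkhoffAverage' ℝ ?_ f x)
  exact isBounded_iff_forall_norm_le.2 ⟨C, by rintro _ ⟨y, rfl⟩; exact hg y⟩

lemma birkhoffLimsup_comp_of_commute {S : α → α} (hfS : Function.Commute f S)
    (hgS : g ∘ S = g) : birkhoffLimsup f g ∘ S = birkhoffLimsup f g := by
  ext x
  have hsum k : g (f^[k] (S x)) = g (f^[k] x) := by
    rw [(hfS.iterate_left k).eq]; exact congr_fun hgS _
  simp only [Function.comp_apply, birkhoffLimsup, birkhoffAverage, birkhoffSum, hsum]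

lemma birkhoffSum_sub_birkhoffLimsup_add_const (hg : ∀ x, |g x| ≤ C) (δ : ℝ) {n : ℕ}
    (hn : n ≠ 0) (x : α) : birkhoffSum f (g - birkhoffLimsup f g + fun _ => δ) n x =
      n * (birkhoffAverage ℝ f g n x - birkhoffLimsup f g x + δ) := by
  rw [birkhoffSum_add', birkhoffSum_sub, birkhoffSum_of_comp_eq (birkhoffLimsup_comp hg),
    birkhoffSum_of_comp_eq (φ := fun _ => δ) rfl, birkhoffAverage, smul_eq_mul, mul_add, mul_sub,
    mul_inv_cancel_left₀ (by exact_mod_cast hn)]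
  simp

lemma birkhoffLimsup_add_birkhoffLimsup_neg_nonneg (hg : ∀ x, |g x| ≤ C) (x : α) :
    0 ≤ birkhoffLimsup f g x + birkhoffLimsup f (-g) x := by
  simpa [birkhoffLimsup, birkhoffAverage_neg] using
    limsup_add_limsup_neg_nonneg (isBoundedUnder_abs_birkhoffAverage (f := f) hg x)

lemma birkhoffLimsup_nonneg (hg0 : ∀ x, 0 ≤ g x) (hg : ∀ x, |g x| ≤ C) (x : α) :
    0 ≤ birkhoffLimsup f g x :=
  le_limsup_of_frequently_le (Frequently.of_forall fun n =>
      smul_nonneg (by positivity) (sum_nonneg fun _ _ => hg0 _))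
    (isBoundedUnder_le_abs.1 (isBoundedUnder_abs_birkhoffAverage hg x)).1

lemma exists_birkhoffSum_sub_birkhoffLimsup_add_const_pos (hg : ∀ x, |g x| ≤ C) {δ : ℝ}
    (hδ : 0 < δ) (x : α) : ∃ n, 0 < birkhoffSum f (g - birkhoffLimsup f g + fun _ => δ) n x := by
  have hlt : birkhoffLimsup f g x - δ < limsup (birkhoffAverage ℝ f g · x) atTop :=
    sub_lt_self _ hδ
  obtain ⟨n, hn, hn0⟩ := ((frequently_lt_of_lt_limsup (isBoundedUnder_le_abs.1
    (isBoundedUnder_abs_birkhoffAverage hg x)).2.isCoboundedUnder_le hlt).and_eventually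
    (eventually_ne_atTop 0)).exists
  exact ⟨n, birkhoffSum_sub_birkhoffLimsup_add_const hg δ hn0 x ▸ mul_pos (by positivity)
    (by linarith)⟩

end BirkhoffAverages

section MaximalErgodic

variable {α : Type*} {f : α → α} {g : α → ℝ} {n : ℕ} {x : α}

noncomputable def maxBirkhoffSum (f : α → α) (g : α → ℝ) (n : ℕ) (x : α) : ℝ :=
  (range (n + 1)).sup' nonempty_range_add_one (birkhoffSum f g · x)

lemma birkhoffSum_le_maxBirkhoffSum {k : ℕ} (hk : k ≤ n) :
    birkhoffSum f g k x ≤ maxBirkhoffSum f g n x :=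
  le_sup' (birkhoffSum f g · x) (mem_range_succ_iff.2 hk)

lemma maxBirkhoffSum_nonneg : 0 ≤ maxBirkhoffSum f g n x := by
  simpa using birkhoffSum_le_maxBirkhoffSum (f := f) (g := g) (x := x) (Nat.zero_le n)

lemma monotone_maxBirkhoffSum : Monotone (maxBirkhoffSum f g · x) := fun _ _ hmn =>
  sup'_mono _ (range_subset_range.2 (by omega)) _

lemma maxBirkhoffSum_le_birkhoffSum_abs : maxBirkhoffSum f g n x ≤ birkhoffSum f (|g|) n x :=
  sup'_le _ _ fun k hk => calc
    birkhoffSum f g k x ≤ birkhoffSum f (|g|) k x :=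
      sum_le_sum fun _ _ => le_abs_self _
    _ ≤ birkhoffSum f (|g|) n x :=
      sum_le_sum_of_subset_of_nonneg (range_subset_range.2 (mem_range_succ_iff.1 hk))
        fun _ _ _ => abs_nonneg _

lemma maxBirkhoffSum_le_add_apply (h : 0 < maxBirkhoffSum f g n x) :
    maxBirkhoffSum f g n x ≤ g x + maxBirkhoffSum f g n (f x) := by
  obtain ⟨k, hk, hmax⟩ := exists_mem_eq_sup' nonempty_range_add_one (birkhoffSum f g · x)
  rw [maxBirkhoffSum, hmax] at h ⊢
  cases k with
  | zero => simp at h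
  | succ j =>
    have hj : j ≤ n := by rw [mem_range] at hk; omega
    rw [birkhoffSum_succ']
    gcongr
    exact birkhoffSum_le_maxBirkhoffSum hj

variable [MeasurableSpace α] {μ : Measure α}

lemma measurable_maxBirkhoffSum (hf : Measurable f) (hg : Measurable g) (n : ℕ) :
    Measurable (maxBirkhoffSum f g n) :=
  Finset.measurable_range_sup'' fun k _ => measurable_birkhoffSum hf hg k

lemma integrable_maxBirkhoffSum (hf : MeasurePreserving f μ μ) (hgm : Measurable g)
    (hg : Integrable g μ) (n : ℕ) : Integrable (maxBirkhoffSum f g n) μ := by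
  refine Integrable.mono' (g := birkhoffSum f (|g|) n)
    (integrable_finsetSum _ fun k _ => (hf.iterate k).integrable_comp_of_integrable hg.abs)
    (measurable_maxBirkhoffSum hf.measurable hgm n).aestronglyMeasurable
    (Eventually.of_forall fun x => ?_)
  rw [Real.norm_of_nonneg maxBirkhoffSum_nonneg]
  exact maxBirkhoffSum_le_birkhoffSum_abs

theorem setIntegral_maxBirkhoffSum_pos_nonneg (hf : MeasurePreserving f μ μ)
    (hgm : Measurable g) (hg : Integrable g μ) (n : ℕ) :
    0 ≤ ∫ x in {x | 0 < maxBirkhoffSum f g n x}, g x ∂μ := by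
  set M := maxBirkhoffSum f g n
  have hMm : Measurable M := measurable_maxBirkhoffSum hf.measurable hgm n
  have hMi : Integrable M μ := integrable_maxBirkhoffSum hf hgm hg n
  have hMfi : Integrable (M ∘ f) μ := hf.integrable_comp_of_integrable hMi
  have hs : MeasurableSet {x | 0 < M x} := measurableSet_lt measurable_const hMm
  calc (0 : ℝ) = ∫ x, M x ∂μ - ∫ x, M (f x) ∂μ := by
        rw [← integral_map hf.aemeasurable hMm.aestronglyMeasurable, hf.map_eq, sub_self]
    _ ≤ ∫ x in {x | 0 < M x}, M x ∂μ - ∫ x in {x | 0 < M x}, M (f x) ∂μ := by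
        rw [← setIntegral_eq_integral_of_forall_compl_eq_zero (f := M) fun x hx =>
          le_antisymm (not_lt.1 hx) maxBirkhoffSum_nonneg]
        exact sub_le_sub_left
          (setIntegral_le_integral hMfi (Eventually.of_forall fun x => maxBirkhoffSum_nonneg)) _
    _ = ∫ x in {x | 0 < M x}, (M x - M (f x)) ∂μ :=
        (integral_sub hMi.integrableOn hMfi.integrableOn).symm
    _ ≤ ∫ x in {x | 0 < M x}, g x ∂μ :=
        setIntegral_mono_on (hMi.sub hMfi).integrableOn hg.integrableOn hs fun x hx => by
          linarith [maxBirkhoffSum_le_add_apply (f := f) (g := g) hx]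

end MaximalErgodic

section BirkhoffErgodicTheorem

variable {α : Type*} [MeasurableSpace α] {μ : Measure α} [IsFiniteMeasure μ] {f : α → α}
  {g : α → ℝ} {C : ℝ}

lemma integrable_of_abs_le (hgm : Measurable g) (hg : ∀ x, |g x| ≤ C) : Integrable g μ :=
  Integrable.of_bound hgm.aestronglyMeasurable C (Eventually.of_forall hg)

lemma integral_birkhoffLimsup_le_add (hf : MeasurePreserving f μ μ) (hgm : Measurable g)
    (hg : ∀ x, |g x| ≤ C) {δ : ℝ} (hδ : 0 < δ) :
    ∫ x, birkhoffLimsup f g x ∂μ ≤ ∫ x, g x ∂μ + δ * μ.real Set.univ := by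
  set ψ : α → ℝ := g - birkhoffLimsup f g + fun _ => δ
  have hlm := measurable_birkhoffLimsup hf.measurable hgm
  have hψm : Measurable ψ := (hgm.sub hlm).add measurable_const
  have hgi : Integrable g μ := integrable_of_abs_le hgm hg
  have hli : Integrable (birkhoffLimsup f g) μ :=
    integrable_of_abs_le hlm (abs_birkhoffLimsup_le hg)
  have hψi : Integrable ψ μ := (hgi.sub hli).add (integrable_const δ)
  have hcover : ⋃ n, {x | 0 < maxBirkhoffSum f ψ n x} = Set.univ := by
    refine Set.eq_univ_of_forall fun x => Set.mem_iUnion.2 ?_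
    obtain ⟨n, hn⟩ := exists_birkhoffSum_sub_birkhoffLimsup_add_const_pos (f := f) hg hδ x
    exact ⟨n, hn.trans_le (birkhoffSum_le_maxBirkhoffSum le_rfl)⟩
  have hmono : Monotone fun n => {x | 0 < maxBirkhoffSum f ψ n x} :=
    fun m n hmn x hx => hx.trans_le (monotone_maxBirkhoffSum hmn)
  have hlim := tendsto_setIntegral_of_monotone
    (fun n => measurableSet_lt measurable_const (measurable_maxBirkhoffSum hf.measurable hψm n))
    hmono hψi.integrableOn
  rw [hcover, setIntegral_univ] at hlim
  have hψ0 : 0 ≤ ∫ x, ψ x ∂μ :=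
    ge_of_tendsto' hlim fun n => setIntegral_maxBirkhoffSum_pos_nonneg hf hψm hψi n
  have hψ : ∫ x, ψ x ∂μ =
      ∫ x, g x ∂μ - ∫ x, birkhoffLimsup f g x ∂μ + δ * μ.real Set.univ := by
    simp only [ψ, Pi.add_apply, Pi.sub_apply]
    rw [integral_add (f := fun x => g x - birkhoffLimsup f g x) (hgi.sub hli)
      (integrable_const δ), integral_sub hgi hli, integral_const, smul_eq_mul, mul_comm]
  rw [hψ] at hψ0
  linarith

theorem integral_birkhoffLimsup_le (hf : MeasurePreserving f μ μ) (hgm : Measurable g)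
    (hg : ∀ x, |g x| ≤ C) : ∫ x, birkhoffLimsup f g x ∂μ ≤ ∫ x, g x ∂μ := by
  refine le_of_forall_pos_le_add fun ε hε => ?_
  have hμ : 0 ≤ μ.real Set.univ := measureReal_nonneg
  calc ∫ x, birkhoffLimsup f g x ∂μ
      ≤ ∫ x, g x ∂μ + ε / (μ.real Set.univ + 1) * μ.real Set.univ :=
        integral_birkhoffLimsup_le_add hf hgm hg (by positivity)
    _ ≤ ∫ x, g x ∂μ + ε := by
        gcongr
        rw [div_mul_eq_mul_div, div_le_iff₀ (by positivity)]
        nlinarith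

theorem ae_birkhoffLimsup_add_birkhoffLimsup_neg_eq_zero (hf : MeasurePreserving f μ μ)
    (hgm : Measurable g) (hg : ∀ x, |g x| ≤ C) :
    ∀ᵐ x ∂μ, birkhoffLimsup f g x + birkhoffLimsup f (-g) x = 0 := by
  have hg' : ∀ x, |(-g) x| ≤ C := by simpa using hg
  have hD0 : 0 ≤ birkhoffLimsup f g + birkhoffLimsup f (-g) :=
    birkhoffLimsup_add_birkhoffLimsup_neg_nonneg hg
  have hi := integrable_of_abs_le (μ := μ) (measurable_birkhoffLimsup hf.measurable hgm)
    (abs_birkhoffLimsup_le hg)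
  have hi' := integrable_of_abs_le (μ := μ) (measurable_birkhoffLimsup hf.measurable hgm.neg)
    (abs_birkhoffLimsup_le hg')
  have hD : ∫ x, (birkhoffLimsup f g + birkhoffLimsup f (-g)) x ∂μ = 0 := by
    refine le_antisymm ?_ (integral_nonneg hD0)
    rw [Pi.add_def, integral_add hi hi']
    have := integral_birkhoffLimsup_le hf hgm.neg hg'
    simp only [Pi.neg_apply, integral_neg] at this
    linarith [integral_birkhoffLimsup_le hf hgm hg]
  exact (integral_eq_zero_iff_of_nonneg hD0 (hi.add hi')).1 hD

theorem ae_tendsto_birkhoffAverage (hf : MeasurePreserving f μ μ) (hgm : Measurable g)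
    (hg : ∀ x, |g x| ≤ C) :
    ∀ᵐ x ∂μ, Tendsto (birkhoffAverage ℝ f g · x) atTop (𝓝 (birkhoffLimsup f g x)) := by
  filter_upwards [ae_birkhoffLimsup_add_birkhoffLimsup_neg_eq_zero hf hgm hg] with x hx
  exact tendsto_limsup_of_limsup_add_limsup_neg_nonpos (isBoundedUnder_abs_birkhoffAverage hg x)
    (by simpa [birkhoffLimsup, birkhoffAverage_neg] using hx.le)

theorem integral_birkhoffLimsup (hf : MeasurePreserving f μ μ) (hgm : Measurable g)
    (hg : ∀ x, |g x| ≤ C) : ∫ x, birkhoffLimsup f g x ∂μ = ∫ x, g x ∂μ := by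
  refine (integral_birkhoffLimsup_le hf hgm hg).antisymm ?_
  have h := integral_birkhoffLimsup_le hf hgm.neg (by simpa using hg)
  rw [integral_congr_ae (g := fun x => -birkhoffLimsup f g x)
    (by filter_upwards [ae_birkhoffLimsup_add_birkhoffLimsup_neg_eq_zero hf hgm hg] with x hx
        linarith), Pi.neg_def, integral_neg, integral_neg] at h
  linarith

end BirkhoffErgodicTheorem

section TailSupremum

variable {α : Type*} {G : ℕ → α → ℝ} {C : ℝ}

noncomputable def tailSupAbs (G : ℕ → α → ℝ) (M : ℕ) (x : α) : ℝ := ⨆ n, |G (M + n) x|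

lemma bddAbove_range_abs_tail (hG : ∀ N x, |G N x| ≤ C) (M : ℕ) (x : α) :
    BddAbove (Set.range fun n => |G (M + n) x|) :=
  ⟨C, by rintro _ ⟨n, rfl⟩; exact hG _ x⟩

lemma abs_le_tailSupAbs (hG : ∀ N x, |G N x| ≤ C) {M N : ℕ} (hMN : M ≤ N) (x : α) :
    |G N x| ≤ tailSupAbs G M x := by
  obtain ⟨n, rfl⟩ := Nat.exists_eq_add_of_le hMN
  exact le_ciSup (bddAbove_range_abs_tail hG M x) n

lemma tailSupAbs_nonneg (hG : ∀ N x, |G N x| ≤ C) (M : ℕ) (x : α) : 0 ≤ tailSupAbs G M x :=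
  (abs_nonneg _).trans (abs_le_tailSupAbs hG le_rfl x)

lemma abs_tailSupAbs_le (hG : ∀ N x, |G N x| ≤ C) (M : ℕ) (x : α) :
    |tailSupAbs G M x| ≤ C := by
  rw [abs_of_nonneg (tailSupAbs_nonneg hG M x)]
  exact ciSup_le fun n => hG _ x

lemma measurable_tailSupAbs [MeasurableSpace α] (hGm : ∀ N, Measurable (G N)) (M : ℕ) :
    Measurable (tailSupAbs G M) :=
  Measurable.iSup fun n => (hGm (M + n)).abs

lemma tendsto_tailSupAbs (hG : ∀ N x, |G N x| ≤ C) {x : α}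
    (hx : Tendsto (G · x) atTop (𝓝 0)) : Tendsto (tailSupAbs G · x) atTop (𝓝 0) := by
  refine Metric.tendsto_atTop.2 fun ε hε => ?_
  obtain ⟨M, hM⟩ := Metric.tendsto_atTop.1 hx (ε / 2) (half_pos hε)
  refine ⟨M, fun K hK => ?_⟩
  rw [Real.dist_eq, sub_zero, abs_of_nonneg (tailSupAbs_nonneg hG K x)]
  refine (ciSup_le fun n => ?_).trans_lt (half_lt_self hε)
  simpa [Real.dist_eq] using (hM (K + n) (by omega)).le

end TailSupremum

section MakerErgodicTheorem

variable {α : Type*} [MeasurableSpace α] {μ : Measure α}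

lemma ae_iInf_eq_zero_of_tendsto_integral {F : ℕ → α → ℝ} (hFm : ∀ M, Measurable (F M))
    (hFi : ∀ M, Integrable (F M) μ) (hF0 : ∀ M x, 0 ≤ F M x)
    (hF : Tendsto (fun M => ∫ x, F M x ∂μ) atTop (𝓝 0)) : ∀ᵐ x ∂μ, ⨅ M, F M x = 0 := by
  have hbdd x : BddBelow (Set.range fun M => F M x) := ⟨0, by rintro _ ⟨M, rfl⟩; exact hF0 M x⟩
  have hL0 : 0 ≤ fun x => ⨅ M, F M x := fun x => le_ciInf fun M => hF0 M x
  have hLi : Integrable (fun x => ⨅ M, F M x) μ :=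
    (hFi 0).mono' (Measurable.iInf hFm).aestronglyMeasurable (Eventually.of_forall fun x => by
      rw [Real.norm_of_nonneg (hL0 x)]; exact ciInf_le (hbdd x) 0)
  have hint : ∫ x, ⨅ M, F M x ∂μ = 0 :=
    le_antisymm (ge_of_tendsto' hF fun M => integral_mono hLi (hFi M) fun x => ciInf_le (hbdd x) M)
      (integral_nonneg hL0)
  exact (integral_eq_zero_iff_of_nonneg hL0 hLi).1 hint

theorem ae_tendsto_birkhoffAverage_of_tendsto_zero [IsFiniteMeasure μ] {f : α → α} {C : ℝ}
    (hf : MeasurePreserving f μ μ) {G : ℕ → α → ℝ} (hGm : ∀ N, Measurable (G N))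
    (hG : ∀ N x, |G N x| ≤ C) (hG0 : ∀ᵐ x ∂μ, Tendsto (G · x) atTop (𝓝 0)) :
    ∀ᵐ x ∂μ, Tendsto (fun N => birkhoffAverage ℝ f (G N) N x) atTop (𝓝 0) := by
  have hem := measurable_tailSupAbs hGm
  have he := abs_tailSupAbs_le hG
  have hlimsup_integral : Tendsto (fun M => ∫ x, birkhoffLimsup f (tailSupAbs G M) x ∂μ) atTop
      (𝓝 0) := by
    simp only [integral_birkhoffLimsup hf (hem _) (he _)]
    simpa using tendsto_integral_of_dominated_convergence (fun _ => C)
      (fun M => (hem M).aestronglyMeasurable) (integrable_const C)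
      (fun M => Eventually.of_forall (he M)) (hG0.mono fun x hx => tendsto_tailSupAbs hG hx)
  filter_upwards [ae_all_iff.2 fun M => ae_tendsto_birkhoffAverage hf (hem M) (he M),
    ae_iInf_eq_zero_of_tendsto_integral (fun M => measurable_birkhoffLimsup hf.measurable (hem M))
      (fun M => integrable_of_abs_le (measurable_birkhoffLimsup hf.measurable (hem M))
        (abs_birkhoffLimsup_le (he M)))
      (fun M => birkhoffLimsup_nonneg (tailSupAbs_nonneg hG M) (he M)) hlimsup_integral]
    with x hx hinf
  refine Metric.tendsto_atTop.2 fun ε hε => ?_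
  obtain ⟨M, hM⟩ : ∃ M, birkhoffLimsup f (tailSupAbs G M) x < ε :=
    exists_lt_of_ciInf_lt (hinf ▸ hε)
  obtain ⟨N₀, hN₀⟩ := eventually_atTop.1 ((hx M).eventually (gt_mem_nhds hM))
  refine ⟨max M N₀, fun N hN => ?_⟩
  rw [Real.dist_eq, sub_zero]
  exact (abs_birkhoffAverage_le_birkhoffAverage (abs_le_tailSupAbs hG (le_of_max_le_left hN)) N
    x).trans_lt (hN₀ N (le_of_max_le_right hN))

end MakerErgodicTheorem

section CommutingMaps

variable {α : Type*} {T S : α → α}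

lemma sum_sum_iterate_div_sq_eq_birkhoffAverage (hTS : Function.Commute T S) (φ : α → ℝ)
    (N : ℕ) (x : α) :
    (1 / (N : ℝ) ^ 2) * ∑ i ∈ range N, ∑ j ∈ range N, φ (T^[i] (S^[j] x)) =
      birkhoffAverage ℝ T (birkhoffAverage ℝ S φ N) N x := by
  simp only [birkhoffAverage, birkhoffSum, smul_eq_mul, mul_sum,
    fun i j => (hTS.iterate_iterate i j).eq]
  exact sum_congr rfl fun i _ => sum_congr rfl fun j _ => by ring

variable [MeasurableSpace α] {μ : Measure α}

lemma exists_ae_eq_const_of_comp_eq [IsProbabilityMeasure μ]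
    (herg : ∀ s, MeasurableSet s → T ⁻¹' s = s → S ⁻¹' s = s → μ s = 0 ∨ μ s = 1)
    {β : Type*} [Nonempty β] [MeasurableSpace β] [MeasurableSpace.CountablySeparated β]
    {h : α → β} (hm : Measurable h) (hT : h ∘ T = h) (hS : h ∘ S = h) :
    ∃ c, h =ᵐ[μ] Function.const α c :=
  exists_eventuallyEq_const_of_forall_separating MeasurableSet fun U hU =>
    (herg _ (hm hU) (by rw [← Set.preimage_comp, hT]) (by rw [← Set.preimage_comp, hS])).symm.imp
      (fun h1 => (ae_iff_measure_eq (hm hU).nullMeasurableSet).2 (h1.trans measure_univ.symm))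
      measure_eq_zero_iff_ae_notMem.1

theorem ae_tendsto_sum_sum_iterate_div_sq [IsProbabilityMeasure μ] (hT : MeasurePreserving T μ μ)
    (hS : MeasurePreserving S μ μ) (hTS : Function.Commute T S)
    (herg : ∀ s, MeasurableSet s → T ⁻¹' s = s → S ⁻¹' s = s → μ s = 0 ∨ μ s = 1)
    {φ : α → ℝ} {C : ℝ} (hφm : Measurable φ) (hφ : ∀ x, |φ x| ≤ C) :
    ∀ᵐ x ∂μ, Tendsto (fun N : ℕ => (1 / (N : ℝ) ^ 2) *
      ∑ i ∈ range N, ∑ j ∈ range N, φ (T^[i] (S^[j] x))) atTop (𝓝 (∫ x, φ x ∂μ)) := by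
  set g := birkhoffLimsup S φ
  have hgm : Measurable g := measurable_birkhoffLimsup hS.measurable hφm
  have hg : ∀ x, |g x| ≤ C := abs_birkhoffLimsup_le hφ
  have hconst : ∀ᵐ x ∂μ, birkhoffLimsup T g x = ∫ x, φ x ∂μ := by
    obtain ⟨c, hc⟩ := exists_ae_eq_const_of_comp_eq herg
      (measurable_birkhoffLimsup hT.measurable hgm) (birkhoffLimsup_comp hg)
      (birkhoffLimsup_comp_of_commute hTS (birkhoffLimsup_comp hφ))
    have hint : ∫ x, birkhoffLimsup T g x ∂μ = c := by simp [integral_congr_ae hc]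
    rw [integral_birkhoffLimsup hT hgm hg, integral_birkhoffLimsup hS hφm hφ] at hint
    exact hint ▸ hc
  -- Maker's theorem handles the error made by replacing the inner averages by their limit `g`
  have herror := ae_tendsto_birkhoffAverage_of_tendsto_zero hT
    (G := fun N => birkhoffAverage ℝ S φ N - g)
    (fun N => (measurable_birkhoffAverage hS.measurable hφm N).sub hgm)
    (fun N x => (abs_sub _ _).trans (add_le_add (abs_birkhoffAverage_le hφ N x) (hg x)))
    (by filter_upwards [ae_tendsto_birkhoffAverage hS hφm hφ] with x hx
        simpa only [Pi.sub_apply, sub_self] using hx.sub_const (birkhoffLimsup S φ x))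
  filter_upwards [herror, ae_tendsto_birkhoffAverage hT hgm hg, hconst] with x hx hx' hc
  simp only [sum_sum_iterate_div_sq_eq_birkhoffAverage hTS, birkhoffAverage_sub] at hx ⊢
  simpa [hc] using hx.add hx'

end CommutingMaps

section Approximation

lemma Equicontinuous.tendsto_of_denseRange {ι κ X α : Type*} [TopologicalSpace X] [UniformSpace α]
    {l : Filter ι} {F : ι → X → α} {L : X → α} (hF : Equicontinuous F) (hL : Continuous L)
    {u : κ → X} (hu : DenseRange u) (h : ∀ m, Tendsto (F · (u m)) l (𝓝 (L (u m)))) (x : X) :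
    Tendsto (F · x) l (𝓝 (L x)) := by
  have hsub := (hF.isClosed_setOfPred_tendsto (l := l) hL).closure_subset_iff.2
    (Set.range_subset_iff.2 h)
  exact hsub (hu.closure_range ▸ Set.mem_univ x)

variable {X : Type*} [TopologicalSpace X] [CompactSpace X]

lemma lipschitzWith_one_sum_sum_div_sq (N : ℕ) (y : ℕ → ℕ → X) :
    LipschitzWith 1 fun φ : C(X, ℝ) =>
      (1 / (N : ℝ) ^ 2) * ∑ i ∈ range N, ∑ j ∈ range N, φ (y i j) := by
  refine LipschitzWith.of_dist_le_mul fun φ ψ => ?_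
  rw [NNReal.coe_one, one_mul]
  calc dist ((1 / (N : ℝ) ^ 2) * ∑ i ∈ range N, ∑ j ∈ range N, φ (y i j))
        ((1 / (N : ℝ) ^ 2) * ∑ i ∈ range N, ∑ j ∈ range N, ψ (y i j))
      = (1 / (N : ℝ) ^ 2) * dist (∑ i ∈ range N, ∑ j ∈ range N, φ (y i j))
          (∑ i ∈ range N, ∑ j ∈ range N, ψ (y i j)) := by
        rw [Real.dist_eq, Real.dist_eq, ← mul_sub, abs_mul, abs_of_nonneg (by positivity)]
    _ ≤ (1 / (N : ℝ) ^ 2) * ∑ i ∈ range N, ∑ j ∈ range N, dist φ ψ := by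
        gcongr
        exact (dist_sum_sum_le _ _ _).trans <| sum_le_sum fun i _ =>
          (dist_sum_sum_le _ _ _).trans <| sum_le_sum fun j _ =>
            ContinuousMap.dist_apply_le_dist (f := φ) (g := ψ) _
    _ ≤ dist φ ψ := by
        rcases eq_or_ne N 0 with rfl | hN
        · simp
        · simp [field]

lemma lipschitzWith_one_integral [MeasurableSpace X] [OpensMeasurableSpace X] (μ : Measure X)
    [IsProbabilityMeasure μ] : LipschitzWith 1 fun φ : C(X, ℝ) => ∫ x, φ x ∂μ := by
  have hint (φ : C(X, ℝ)) : Integrable φ μ :=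
    integrable_of_abs_le φ.continuous.measurable fun x => by simpa using φ.norm_coe_le_norm x
  refine LipschitzWith.of_dist_le_mul fun φ ψ => ?_
  rw [NNReal.coe_one, one_mul, Real.dist_eq, ← integral_sub (hint φ) (hint ψ)]
  simpa using norm_integral_le_of_norm_le_const (μ := μ) (f := fun x => φ x - ψ x)
    (Eventually.of_forall fun x => by
      rw [Real.norm_eq_abs, ← Real.dist_eq]; exact ContinuousMap.dist_apply_le_dist x)

end Approximation

lemma exists_irrational_mem_Ico_of_ae {T : ℝ} [Fact (0 < T)] {μ : Measure (AddCircle T)}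
    [NeZero μ] [NullSingletonClass μ] {P : AddCircle T → Prop} (hP : ∀ᵐ z ∂μ, P z) :
    ∃ x : ℝ, x ∈ Set.Ico 0 T ∧ Irrational x ∧ P x := by
  have hrat : μ (Set.range fun r : ℚ => ((r : ℝ) : AddCircle T)) = 0 :=
    (Set.countable_range _).measure_zero μ
  have : (ae μ).NeBot := ae_neBot.2 (NeZero.ne μ)
  obtain ⟨z, hz, hzrat⟩ := (hP.and (measure_eq_zero_iff_ae_notMem.1 hrat)).exists
  refine ⟨AddCircle.equivIco T 0 z, by simpa using (AddCircle.equivIco T 0 z).2,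
    fun ⟨r, hr⟩ => hzrat ⟨r, ?_⟩, by rwa [AddCircle.coe_equivIco]⟩
  simp only [hr, AddCircle.coe_equivIco]

theorem continuous_ergodic_measure_is_limit_of_diracs_along_irrational_orbit_general
    (p q : ℕ)
    (μ : Measure (AddCircle (1:ℝ))) [IsProbabilityMeasure μ]
    (hcont : ∀ z : AddCircle (1:ℝ), μ {z} = 0)
    (hinvp : Measure.map (fun z => p • z) μ = μ)
    (hinvq : Measure.map (fun z => q • z) μ = μ)
    (herg : ∀ s : Set (AddCircle (1:ℝ)), MeasurableSet s →
      (fun z => p • z) ⁻¹' s = s → (fun z => q • z) ⁻¹' s = s → μ s = 0 ∨ μ s = 1) :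
    ∃ x : ℝ, x ∈ Set.Ico (0:ℝ) 1 ∧ Irrational x ∧
      ∀ f : C(AddCircle (1:ℝ), ℝ),
        Tendsto
          (fun N : ℕ => (1 / (N : ℝ) ^ 2) *
            ∑ i ∈ Finset.range N, ∑ j ∈ Finset.range N,
              f ((p ^ i * q ^ j) • (x : AddCircle (1:ℝ))))
          atTop (nhds (∫ z, f z ∂μ)) := by
  have : NullSingletonClass μ := ⟨hcont⟩
  have hp : MeasurePreserving (fun z : AddCircle (1:ℝ) => p • z) μ μ :=
    ⟨(continuous_const_smul p).measurable, hinvp⟩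
  have hq : MeasurePreserving (fun z : AddCircle (1:ℝ) => q • z) μ μ :=
    ⟨(continuous_const_smul q).measurable, hinvq⟩
  have hpq : Function.Commute (fun z : AddCircle (1:ℝ) => p • z) (q • ·) := smul_comm p q
  let u := TopologicalSpace.denseSeq C(AddCircle (1:ℝ), ℝ)
  have hgeneric : ∀ᵐ z ∂μ, ∀ m, Tendsto (fun N : ℕ => (1 / (N : ℝ) ^ 2) *
      ∑ i ∈ range N, ∑ j ∈ range N, u m ((p ^ i * q ^ j) • z)) atTop (𝓝 (∫ z, u m z ∂μ)) :=
    ae_all_iff.2 fun m => by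
      simpa only [smul_iterate, mul_smul] using ae_tendsto_sum_sum_iterate_div_sq hp hq hpq herg
        (u m).continuous.measurable fun z => by simpa using (u m).norm_coe_le_norm z
  obtain ⟨x, hx, hirr, hxgen⟩ := exists_irrational_mem_Ico_of_ae hgeneric
  exact ⟨x, hx, hirr, Equicontinuous.tendsto_of_denseRange
    (LipschitzWith.uniformEquicontinuous _ 1 fun N =>
      lipschitzWith_one_sum_sum_div_sq N _).equicontinuous
    (lipschitzWith_one_integral μ).continuous (TopologicalSpace.denseRange_denseSeq _) hxgen⟩

/-- Every continuous (non-atomic) ergodic `×p,×q`-invariant probability measure on the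
circle is the weak-* limit of square Cesàro averages of Dirac measures along the orbit of
some irrational point `x ∈ [0,1)`. -/
theorem continuous_ergodic_measure_is_limit_of_diracs_along_irrational_orbit
    (p q : ℕ) (hp : 2 ≤ p) (hq : 2 ≤ q)
    (hirr : Irrational (Real.log p / Real.log q))
    (μ : Measure (AddCircle (1:ℝ))) [IsProbabilityMeasure μ]
    (hcont : ∀ z : AddCircle (1:ℝ), μ {z} = 0)
    (hinvp : Measure.map (fun z => p • z) μ = μ)
    (hinvq : Measure.map (fun z => q • z) μ = μ)
    (herg : ∀ s : Set (AddCircle (1:ℝ)), MeasurableSet s →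
      (fun z => p • z) ⁻¹' s = s → (fun z => q • z) ⁻¹' s = s → μ s = 0 ∨ μ s = 1) :
    ∃ x : ℝ, x ∈ Set.Ico (0:ℝ) 1 ∧ Irrational x ∧
      ∀ f : C(AddCircle (1:ℝ), ℝ),
        Tendsto
          (fun N : ℕ => (1 / (N : ℝ) ^ 2) *
            ∑ i ∈ Finset.range N, ∑ j ∈ Finset.range N,
              f ((p ^ i * q ^ j) • (x : AddCircle (1:ℝ))))
          atTop (nhds (∫ z, f z ∂μ)) :=
  continuous_ergodic_measure_is_limit_of_diracs_along_irrational_orbit_general p q μ hcont hinvp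
    hinvq herg
end
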